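/- arXiv:1711.06378 — 7 statements merged into one kernel-verified Lean document; each statement's English description precedes it below -/
import Mathlib

section
/- Suppose the mean mRNA number M̄ : [0,τ_D] → ℝ satisfies, for every s ∈ [0,τ_D], M̄(s) = M̄(0)·e^{−σ₁ s} + ∫₀^s λ₁·V₀·2^{x/τ_D}·e^{−σ₁(s−x)} dx, together with the equilibrium (division) condition M̄(0) = M̄(τ_D)/2. Then for every s ∈ [0,τ_D], M̄(s)/V(s) = λ₁ τ_D/(σ₁ τ_D + log 2); equivalently M̄(s) = (λ₁ τ_D/(σ₁ τ_D + log 2))·V₀·2^{s/τ_D}. -/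
open Real MeasureTheory intervalIntegral

/-
Writing `2^{x/τ_D} = e^{k x}` with `k = log 2 / τ_D`, the integral is elementary and gives
`M̄(s) = c·2^{s/τ_D} + (M̄(0) - c)·e^{-σ₁ s}` with `c = λ₁ V₀ / (k + σ₁)`. The division condition
then reads `(M̄(0) - c)(2 - e^{-σ₁ τ_D}) = 0`, and `e^{-σ₁ τ_D} < 1` forces `M̄(0) = c`, killing the
transient term.
-/

lemma integral_exp_mul_of_ne_zero {a : ℝ} (ha : a ≠ 0) (s : ℝ) :
    ∫ x in (0 : ℝ)..s, exp (a * x) = (exp (a * s) - 1) / a := by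
  rw [integral_comp_mul_left (fun x => exp x) ha, integral_exp, mul_zero, exp_zero,
    smul_eq_mul, inv_mul_eq_div]

lemma integral_exp_mul_mul_exp_sub {k σ : ℝ} (h : k + σ ≠ 0) (s : ℝ) :
    ∫ x in (0 : ℝ)..s, exp (k * x) * exp (-σ * (s - x))
      = (exp (k * s) - exp (-σ * s)) / (k + σ) := by
  have hfactor : ∀ x, exp (k * x) * exp (-σ * (s - x)) = exp (-σ * s) * exp ((k + σ) * x) := by
    intro x
    rw [← exp_add, ← exp_add]
    ring_nf
  simp_rw [hfactor]
  rw [intervalIntegral.integral_const_mul, integral_exp_mul_of_ne_zero h, mul_div_assoc', mul_sub, ← exp_add]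
  ring_nf

lemma two_rpow_div_eq_exp (τ x : ℝ) : (2 : ℝ) ^ (x / τ) = exp (log 2 / τ * x) := by
  rw [rpow_def_of_pos two_pos, div_mul_eq_mul_div, mul_div_assoc]

/-- Variation-of-constants formula for `M' = λ V₀ 2^{s/τ} - σ M`, in closed form. -/
lemma duhamel_exponential_source {lam σ V τ : ℝ} (hστ : σ * τ + log 2 ≠ 0) (hτ : τ ≠ 0)
    (m₀ s : ℝ) :
    m₀ * exp (-σ * s) + ∫ x in (0 : ℝ)..s, lam * V * (2 : ℝ) ^ (x / τ) * exp (-σ * (s - x))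
      = lam * τ / (σ * τ + log 2) * V * (2 : ℝ) ^ (s / τ)
        + (m₀ - lam * τ / (σ * τ + log 2) * V) * exp (-σ * s) := by
  have hk : log 2 / τ + σ = (σ * τ + log 2) / τ := by field_simp; ring
  have hkσ : log 2 / τ + σ ≠ 0 := by rw [hk]; exact div_ne_zero hστ hτ
  simp_rw [two_rpow_div_eq_exp τ, mul_assoc (lam * V)]
  rw [intervalIntegral.integral_const_mul, integral_exp_mul_mul_exp_sub hkσ, hk]
  field_simp
  ring

theorem mean_mRNA_concentration_constant_general
    (lam1 sig1 V0 tauD : ℝ)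
    (hsig1 : 0 < sig1) (hV0 : 0 < V0) (htauD : 0 < tauD)
    (M : ℝ → ℝ)
    (hM : ∀ s ∈ Set.Icc (0 : ℝ) tauD,
      M s = M 0 * Real.exp (-sig1 * s)
        + ∫ x in (0 : ℝ)..s, lam1 * V0 * (2 : ℝ) ^ (x / tauD) * Real.exp (-sig1 * (s - x)))
    (hdiv : M 0 = M tauD / 2) :
    ∀ s ∈ Set.Icc (0 : ℝ) tauD,
      M s / (V0 * (2 : ℝ) ^ (s / tauD)) = lam1 * tauD / (sig1 * tauD + Real.log 2) ∧
      M s = lam1 * tauD / (sig1 * tauD + Real.log 2) * (V0 * (2 : ℝ) ^ (s / tauD)) := by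
  set c := lam1 * tauD / (sig1 * tauD + Real.log 2)
  have hden : sig1 * tauD + Real.log 2 ≠ 0 := by positivity
  have hclosed : ∀ s ∈ Set.Icc (0 : ℝ) tauD,
      M s = c * V0 * 2 ^ (s / tauD) + (M 0 - c * V0) * exp (-sig1 * s) := fun s hs => by
    rw [hM s hs, duhamel_exponential_source hden htauD.ne']
  have hdecay : exp (-sig1 * tauD) < 1 := exp_lt_one_iff.mpr (by nlinarith)
  have hM0 : M 0 = c * V0 := by
    have hend := hclosed tauD ⟨htauD.le, le_rfl⟩
    rw [div_self htauD.ne', rpow_one] at hend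
    have hprod : (M 0 - c * V0) * (2 - exp (-sig1 * tauD)) = 0 := by
      linear_combination 2 * hdiv + hend
    exact sub_eq_zero.mp ((mul_eq_zero.mp hprod).resolve_right (by linarith))
  intro s hs
  have hMs : M s = c * (V0 * 2 ^ (s / tauD)) := by rw [hclosed s hs, hM0]; ring
  have hvol : V0 * (2 : ℝ) ^ (s / tauD) ≠ 0 := by positivity
  exact ⟨by rw [hMs, mul_div_cancel_right₀ _ hvol], hMs⟩

/-- If the mean mRNA number `M` satisfies, for every `s ∈ [0, τ_D]`,
`M s = M 0 · e^{-σ₁ s} + ∫₀^s λ₁ V₀ 2^{x/τ_D} e^{-σ₁ (s - x)} dx`, together with the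
equilibrium condition `M 0 = M τ_D / 2`, then for every `s ∈ [0, τ_D]` the concentration
`M s / (V₀ 2^{s/τ_D})` equals `λ₁ τ_D / (σ₁ τ_D + log 2)`; equivalently
`M s = (λ₁ τ_D / (σ₁ τ_D + log 2)) · V₀ · 2^{s/τ_D}`. -/
theorem mean_mRNA_concentration_constant
    (lam1 sig1 V0 tauD : ℝ)
    (hlam1 : 0 ≤ lam1) (hsig1 : 0 < sig1) (hV0 : 0 < V0) (htauD : 0 < tauD)
    (M : ℝ → ℝ)
    (hM : ∀ s ∈ Set.Icc (0 : ℝ) tauD,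
      M s = M 0 * Real.exp (-sig1 * s)
        + ∫ x in (0 : ℝ)..s, lam1 * V0 * (2 : ℝ) ^ (x / tauD) * Real.exp (-sig1 * (s - x)))
    (hdiv : M 0 = M tauD / 2) :
    ∀ s ∈ Set.Icc (0 : ℝ) tauD,
      M s / (V0 * (2 : ℝ) ^ (s / tauD)) = lam1 * tauD / (sig1 * tauD + Real.log 2) ∧
      M s = lam1 * tauD / (sig1 * tauD + Real.log 2) * (V0 * (2 : ℝ) ^ (s / tauD)) :=
  mean_mRNA_concentration_constant_general lam1 sig1 V0 tauD hsig1 hV0 htauD M hM hdiv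
end

section
/- Let c = λ₁ τ_D/(σ₁ τ_D + log 2). Suppose the mean protein number P̄ : [0,τ_D] → ℝ satisfies, for every s ∈ [0,τ_D], P̄(s) = P̄(0) + λ₂·∫₀^s c·V₀·2^{u/τ_D} du, together with the equilibrium (division) condition P̄(0) = P̄(τ_D)/2. Then for every s ∈ [0,τ_D], P̄(s)/V(s) = (λ₂ τ_D/log 2)·(λ₁ τ_D/(σ₁ τ_D + log 2)); equivalently P̄(s) = (λ₂ τ_D/log 2)·c·V₀·2^{s/τ_D}. -/
open Real MeasureTheory intervalIntegral

lemma integral_two_rpow (tauD : ℝ) (htauD : 0 < tauD) (s : ℝ) :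
    (∫ u in (0 : ℝ)..s, (2 : ℝ) ^ (u / tauD))
      = tauD / Real.log 2 * ((2 : ℝ) ^ (s / tauD) - 1) := by
  have hlog : (0 : ℝ) < Real.log 2 := Real.log_pos (by norm_num)
  have ha : Real.log 2 / tauD ≠ 0 := div_ne_zero hlog.ne' htauD.ne'
  have h1 : ∀ u : ℝ, (2 : ℝ) ^ (u / tauD) = Real.exp (Real.log 2 / tauD * u) := by
    intro u
    rw [Real.rpow_def_of_pos (by norm_num)]
    ring_nf
  calc (∫ u in (0 : ℝ)..s, (2 : ℝ) ^ (u / tauD))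
      = ∫ u in (0 : ℝ)..s, Real.exp (Real.log 2 / tauD * u) := by
        simp only [h1]
    _ = (Real.log 2 / tauD)⁻¹ • ∫ u in (Real.log 2 / tauD * 0)..(Real.log 2 / tauD * s), Real.exp u := by
        rw [intervalIntegral.integral_comp_mul_left _ ha]
    _ = tauD / Real.log 2 * ((2 : ℝ) ^ (s / tauD) - 1) := by
        rw [integral_exp, mul_zero, Real.exp_zero, h1, smul_eq_mul]
        field_simp

/-- Let `c = λ₁ τ_D / (σ₁ τ_D + log 2)`. If the mean protein number `P`
satisfies, for every `s ∈ [0, τ_D]`, `P s = P 0 + λ₂ ∫₀^s c V₀ 2^{u/τ_D} du`, together with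
the equilibrium condition `P 0 = P τ_D / 2`, then for every `s ∈ [0, τ_D]` the concentration
`P s / (V₀ 2^{s/τ_D})` equals `(λ₂ τ_D / log 2) · (λ₁ τ_D / (σ₁ τ_D + log 2))`; equivalently
`P s = (λ₂ τ_D / log 2) · c · V₀ · 2^{s/τ_D}`. -/
theorem mean_protein_concentration_constant
    (lam1 sig1 lam2 V0 tauD : ℝ)
    (hlam1 : 0 ≤ lam1) (hsig1 : 0 < sig1) (hlam2 : 0 ≤ lam2) (hV0 : 0 < V0) (htauD : 0 < tauD)
    (c : ℝ) (hc : c = lam1 * tauD / (sig1 * tauD + Real.log 2))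
    (P : ℝ → ℝ)
    (hP : ∀ s ∈ Set.Icc (0 : ℝ) tauD,
      P s = P 0 + lam2 * ∫ u in (0 : ℝ)..s, c * V0 * (2 : ℝ) ^ (u / tauD))
    (hdiv : P 0 = P tauD / 2) :
    ∀ s ∈ Set.Icc (0 : ℝ) tauD,
      P s / (V0 * (2 : ℝ) ^ (s / tauD))
        = lam2 * tauD / Real.log 2 * (lam1 * tauD / (sig1 * tauD + Real.log 2)) ∧
      P s = lam2 * tauD / Real.log 2 * c * (V0 * (2 : ℝ) ^ (s / tauD)) := by
  have hlog : (0 : ℝ) < Real.log 2 := Real.log_pos (by norm_num)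
  have hint : ∀ s : ℝ, (∫ u in (0 : ℝ)..s, c * V0 * (2 : ℝ) ^ (u / tauD))
      = c * V0 * (tauD / Real.log 2 * ((2 : ℝ) ^ (s / tauD) - 1)) := by
    intro s
    rw [intervalIntegral.integral_const_mul, integral_two_rpow tauD htauD]
  have hP' : ∀ s ∈ Set.Icc (0 : ℝ) tauD,
      P s = P 0 + lam2 * (c * V0 * (tauD / Real.log 2 * ((2 : ℝ) ^ (s / tauD) - 1))) := by
    intro s hs; rw [hP s hs, hint]
  have htau_mem : tauD ∈ Set.Icc (0 : ℝ) tauD := ⟨htauD.le, le_refl _⟩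
  have hPt := hP' tauD htau_mem
  rw [div_self htauD.ne', Real.rpow_one] at hPt
  have hP0 : P 0 = lam2 * tauD / Real.log 2 * c * V0 := by
    rw [hPt] at hdiv
    field_simp at hdiv ⊢
    linarith
  intro s hs
  have hpow : (0 : ℝ) < (2 : ℝ) ^ (s / tauD) := Real.rpow_pos_of_pos (by norm_num) _
  have hPs : P s = lam2 * tauD / Real.log 2 * c * (V0 * (2 : ℝ) ^ (s / tauD)) := by
    rw [hP' s hs, hP0]
    field_simp
    ring
  refine ⟨?_, hPs⟩
  rw [hPs, hc, mul_div_assoc]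
  field_simp
end

section
/- Let λ₁ ≥ 0, σ₁ > 0 and 0 ≤ τ_R ≤ τ_D, and set x₀ = (λ₁/σ₁)·[1 − e^{−(τ_D−τ_R)σ₁}/(2 − e^{−τ_D σ₁})]. Let M₀ be Poisson(x₀) distributed, let A be an e^{−σ₁ τ_D}-thinning of M₀, let N ~ Poisson((λ₁/σ₁)(1 − e^{−τ_D σ₁})) and N′ ~ Poisson((λ₁/σ₁)(1 − e^{−(τ_D−τ_R)σ₁})), with A, N, N′ independent. Then the 1/2-thinning of A + N + N′ is again Poisson(x₀) distributed; i.e. x₀ is the equilibrium parameter of the mRNA number at birth. -/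
/-!
Two facts about Poisson variables drive the proof. Independent Poisson variables add to a
Poisson variable with the summed parameter. A `p`-thinning of `X ~ Poisson(r)` is
`Poisson(p r)`: given `X = m` the thinning is a sum of `m` independent Bernoulli(`p`) variables,
hence Binomial(`m`, `p`), and averaging these binomial laws against the Poisson weights
leaves the exponential series of `r (1 - p)`. So `A + N + N'` is Poisson with parameter
`e^{-σ₁τ_D} x₀ + (λ₁/σ₁)(2 - e^{-τ_D σ₁} - e^{-(τ_D-τ_R)σ₁})`, its `1/2`-thinning is
Poisson with half of it, and `x₀` is exactly the fixed point of this affine map.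
-/

open MeasureTheory ProbabilityTheory

/-- `X` has the Poisson distribution with (real, nonnegative) parameter `r`:
`ℙ[X = n] = e^{-r} r^n / n!` for all `n : ℕ`. -/
def HasPoissonLaw {Ω : Type*} [MeasurableSpace Ω] (μ : Measure Ω) (r : ℝ)
    (X : Ω → ℕ) : Prop :=
  ∀ n : ℕ, μ {ω | X ω = n} = ENNReal.ofReal (Real.exp (-r) * r ^ n / n.factorial)

/-- `Y` is an `r`-thinning of `X`: `Y = ∑_{i < X} B i` for some family `(B i)` of
i.i.d. Bernoulli(`r`) random variables independent of `X`. -/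
def IsThinning {Ω : Type*} [MeasurableSpace Ω] (μ : Measure Ω) (r : ℝ)
    (X Y : Ω → ℕ) : Prop :=
  ∃ B : ℕ → Ω → ℕ, (∀ i, Measurable (B i)) ∧
    (∀ i, μ {ω | B i ω = 1} = ENNReal.ofReal r) ∧
    (∀ i, μ {ω | B i ω = 0} = ENNReal.ofReal (1 - r)) ∧
    iIndepFun (fun i : ℕ => if i = 0 then X else B (i - 1)) μ ∧
    ∀ ω, Y ω = ∑ i ∈ Finset.range (X ω), B i ω

open Finset
open scoped Nat NNReal

-- `m - k` truncates, but harmlessly: `m.choose k = 0` when `m < k`.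
def binomialMass (m : ℕ) (p : ℝ) (k : ℕ) : ℝ := m.choose k * p ^ k * (1 - p) ^ (m - k)

lemma binomialMass_nonneg {p : ℝ} (hp0 : 0 ≤ p) (hp1 : p ≤ 1) (m k : ℕ) :
    0 ≤ binomialMass m p k := by
  unfold binomialMass
  have : 0 ≤ 1 - p := by linarith
  positivity

lemma binomialMass_of_lt {m k : ℕ} (h : m < k) (p : ℝ) : binomialMass m p k = 0 := by
  simp [binomialMass, Nat.choose_eq_zero_of_lt h]

lemma binomialMass_succ_succ (m n : ℕ) (p : ℝ) :
    binomialMass m p (n + 1) * (1 - p) + binomialMass m p n * p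
      = binomialMass (m + 1) p (n + 1) := by
  rcases le_or_gt (n + 1) m with hnm | hmn
  · obtain ⟨k, rfl⟩ := Nat.exists_eq_add_of_le hnm
    simp only [binomialMass, Nat.choose_succ_succ (n + 1 + k), Nat.cast_add,
      show n + 1 + k - (n + 1) = k by omega, show n + 1 + k - n = k + 1 by omega,
      show n + 1 + k + 1 - (n + 1) = k + 1 by omega]
    ring
  · rcases (Nat.lt_succ_iff.mp hmn).eq_or_lt with rfl | hlt
    · simp [binomialMass, Nat.choose_succ_self, pow_succ]
    · simp [binomialMass_of_lt, hmn, hlt]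

lemma sum_antidiagonal_binomialMass_mul_binomialMass_one (m n : ℕ) (p : ℝ) :
    ∑ ij ∈ antidiagonal n, binomialMass m p ij.1 * binomialMass 1 p ij.2
      = binomialMass (m + 1) p n := by
  cases n with
  | zero => simp [binomialMass, pow_succ]
  | succ n =>
    rw [Nat.sum_antidiagonal_succ', ← binomialMass_succ_succ,
      sum_eq_single (n, 0)]
    · simp [binomialMass]
    · rintro ⟨i, j⟩ hmem hij
      have hj : j ≠ 0 := by rintro rfl; simp_all
      show binomialMass m p i * binomialMass 1 p (j + 1) = 0
      rw [binomialMass_of_lt (show 1 < j + 1 by omega), mul_zero]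
    · simp

lemma hasSum_poisson_mul_binomialMass (r p : ℝ) (n : ℕ) :
    HasSum (fun m => Real.exp (-r) * r ^ m / m ! * binomialMass m p n)
      (Real.exp (-(p * r)) * (p * r) ^ n / n !) := by
  set f := fun m => Real.exp (-r) * r ^ m / m ! * binomialMass m p n
  have hlow : ∑ m ∈ range n, f m = 0 :=
    sum_eq_zero fun m hm => by simp [f, binomialMass_of_lt (mem_range.mp hm)]
  have hshift : ∀ k, f (k + n)
      = Real.exp (-r) * (p * r) ^ n / n ! * ((r * (1 - p)) ^ k / k !) := by
    intro k
    have hfact : ((k + n).choose n : ℝ) * k ! * n ! = (k + n)! := by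
      exact_mod_cast Nat.add_choose_mul_factorial_mul_factorial k n
    simp only [f, binomialMass, Nat.add_sub_cancel, mul_pow]
    field_simp
    rw [← hfact]
    ring
  have hexp : Real.exp (-r) * Real.exp (r * (1 - p)) = Real.exp (-(p * r)) := by
    rw [← Real.exp_add]; ring_nf
  have hseries : HasSum (fun k => (r * (1 - p)) ^ k / k !) (Real.exp (r * (1 - p))) := by
    rw [Real.exp_eq_exp_ℝ]
    exact NormedSpace.expSeries_div_hasSum_exp _
  have hlimit : Real.exp (-(p * r)) * (p * r) ^ n / n !
      = Real.exp (-r) * (p * r) ^ n / n ! * Real.exp (r * (1 - p)) := by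
    rw [← hexp]; ring
  rw [hlimit, ← add_zero (_ * _), ← hlow, ← hasSum_nat_add_iff, funext hshift]
  exact hseries.mul_left _

section
variable {Ω : Type*} [MeasurableSpace Ω]

def HasBinomialLaw (μ : Measure Ω) (m : ℕ) (p : ℝ) (X : Ω → ℕ) : Prop :=
  ∀ n : ℕ, μ {ω | X ω = n} = ENNReal.ofReal (binomialMass m p n)

variable {μ : Measure Ω}

lemma ProbabilityTheory.IndepFun.measure_add_eq_sum_antidiagonal {X Y : Ω → ℕ}
    (hX : Measurable X) (hY : Measurable Y) (hXY : IndepFun X Y μ) (n : ℕ) :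
    μ {ω | X ω + Y ω = n}
      = ∑ ij ∈ antidiagonal n, μ {ω | X ω = ij.1} * μ {ω | Y ω = ij.2} := by
  have hunion : {ω | X ω + Y ω = n}
      = ⋃ ij ∈ antidiagonal n, X ⁻¹' {ij.1} ∩ Y ⁻¹' {ij.2} := by
    ext ω; simp
  rw [hunion, measure_biUnion_finset]
  · exact sum_congr rfl fun ij _ => hXY.measure_inter_preimage_eq_mul _ _
      (measurableSet_singleton _) (measurableSet_singleton _)
  · intro ij _ kl _ hne
    refine Set.disjoint_left.2 fun ω hij hkl => hne ?_
    simp only [Set.mem_inter_iff, Set.mem_preimage, Set.mem_singleton_iff] at hij hkl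
    exact Prod.ext (hij.1.symm.trans hkl.1) (hij.2.symm.trans hkl.2)
  · exact fun ij _ => (hX (measurableSet_singleton _)).inter (hY (measurableSet_singleton _))

lemma hasPoissonLaw_iff_hasLaw {r : ℝ≥0} {X : Ω → ℕ} (hX : Measurable X) :
    HasPoissonLaw μ r X ↔ HasLaw X (poissonMeasure r) μ := by
  have hmap : ∀ n, μ.map X {n} = μ {ω | X ω = n} :=
    fun n => Measure.map_apply hX (measurableSet_singleton n)
  refine ⟨fun h => ⟨hX.aemeasurable, Measure.ext_of_singleton fun n => ?_⟩, fun h n => ?_⟩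
  · rw [hmap, h, poissonMeasure_singleton]
  · rw [← hmap, h.map_eq, poissonMeasure_singleton]

lemma HasPoissonLaw.add {r s : ℝ} {X Y : Ω → ℕ} (hr : 0 ≤ r) (hs : 0 ≤ s)
    (hX : Measurable X) (hY : Measurable Y) (hXlaw : HasPoissonLaw μ r X)
    (hYlaw : HasPoissonLaw μ s Y) (hXY : IndepFun X Y μ) :
    HasPoissonLaw μ (r + s) (X + Y) := by
  lift r to ℝ≥0 using hr
  lift s to ℝ≥0 using hs
  rw [hasPoissonLaw_iff_hasLaw hX] at hXlaw
  rw [hasPoissonLaw_iff_hasLaw hY] at hYlaw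
  exact_mod_cast (hasPoissonLaw_iff_hasLaw (hX.add hY)).2
    (hXY.hasLaw_add_poissonMeasure hXlaw hYlaw)

variable {p : ℝ}

lemma hasBinomialLaw_zero [IsProbabilityMeasure μ] (p : ℝ) :
    HasBinomialLaw μ 0 p (fun _ => 0) := by
  rintro (_ | n) <;> simp [binomialMass]

lemma hasBinomialLaw_one_of_bernoulli [IsProbabilityMeasure μ] {B : Ω → ℕ}
    (hp0 : 0 ≤ p) (hp1 : p ≤ 1) (hB : Measurable B)
    (h1 : μ {ω | B ω = 1} = ENNReal.ofReal p)
    (h0 : μ {ω | B ω = 0} = ENNReal.ofReal (1 - p)) :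
    HasBinomialLaw μ 1 p B := by
  rintro (_ | _ | n)
  · simpa [binomialMass] using h0
  · simpa [binomialMass] using h1
  · have hfull : μ ({ω | B ω = 0} ∪ {ω | B ω = 1}) = 1 := by
      rw [measure_union (s₂ := {ω | B ω = 1}) (Set.disjoint_left.2 fun ω h0 h1 => by simp_all)
        (hB (measurableSet_singleton 1)), h0, h1, ← ENNReal.ofReal_add (by linarith) hp0]
      simp
    rw [binomialMass_of_lt (by omega), ENNReal.ofReal_zero]
    refine measure_mono_null (fun ω hω => ?_) ((prob_compl_eq_zero_iff
      ((hB (measurableSet_singleton 0)).union (hB (measurableSet_singleton 1)))).2 hfull)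
    simp_all

lemma HasBinomialLaw.add_bernoulli {m : ℕ} {S B : Ω → ℕ} (hp0 : 0 ≤ p) (hp1 : p ≤ 1)
    (hS : Measurable S) (hB : Measurable B) (hSlaw : HasBinomialLaw μ m p S)
    (hBlaw : HasBinomialLaw μ 1 p B) (hSB : IndepFun S B μ) :
    HasBinomialLaw μ (m + 1) p (S + B) := by
  intro n
  simp only [Pi.add_apply]
  rw [hSB.measure_add_eq_sum_antidiagonal hS hB,
    ← sum_antidiagonal_binomialMass_mul_binomialMass_one, ENNReal.ofReal_sum_of_nonneg fun _ _ =>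
      mul_nonneg (binomialMass_nonneg hp0 hp1 _ _) (binomialMass_nonneg hp0 hp1 _ _)]
  refine sum_congr rfl fun ij _ => ?_
  rw [hSlaw, hBlaw, ENNReal.ofReal_mul (binomialMass_nonneg hp0 hp1 _ _)]

lemma hasBinomialLaw_sum_range [IsProbabilityMeasure μ] {B : ℕ → Ω → ℕ}
    (hp0 : 0 ≤ p) (hp1 : p ≤ 1) (hB : ∀ i, Measurable (B i))
    (hBlaw : ∀ i, HasBinomialLaw μ 1 p (B i)) (hInd : iIndepFun B μ) (m : ℕ) :
    HasBinomialLaw μ m p (∑ i ∈ range m, B i) := by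
  induction m with
  | zero => exact hasBinomialLaw_zero p
  | succ m ih =>
    rw [sum_range_succ]
    exact ih.add_bernoulli hp0 hp1 (by fun_prop) (hB m) (hBlaw m)
      (hInd.indepFun_finsetSum_of_notMem hB (by simp))

lemma IsThinning.measure_eq_tsum [IsProbabilityMeasure μ] {X Y : Ω → ℕ}
    (hp0 : 0 ≤ p) (hp1 : p ≤ 1) (hX : Measurable X) (hthin : IsThinning μ p X Y) (n : ℕ) :
    μ {ω | Y ω = n} = ∑' m, μ {ω | X ω = m} * ENNReal.ofReal (binomialMass m p n) := by
  obtain ⟨B, hB, hB1, hB0, hInd, hY⟩ := hthin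
  set g : ℕ → Ω → ℕ := fun i => if i = 0 then X else B (i - 1)
  have hg : ∀ i, Measurable (g i) := by rintro (_ | i) <;> simp [g, hX, hB]
  have hBInd : iIndepFun B μ := by
    simpa [g, Function.comp_def] using hInd.precomp Nat.succ_injective
  have hSX : ∀ m, IndepFun (∑ i ∈ range m, B i) X μ := fun m => by
    simpa [g, sum_map] using hInd.indepFun_finsetSum_of_notMem hg
      (s := (range m).map ⟨Nat.succ, Nat.succ_injective⟩) (i := 0) (by simp)
  have hSlaw := hasBinomialLaw_sum_range hp0 hp1 hB
    (fun i => hasBinomialLaw_one_of_bernoulli hp0 hp1 (hB i) (hB1 i) (hB0 i)) hBInd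
  have hunion : {ω | Y ω = n} = ⋃ m, X ⁻¹' {m} ∩ (∑ i ∈ range m, B i) ⁻¹' {n} := by
    ext ω; simp [hY]
  rw [hunion, measure_iUnion]
  · refine tsum_congr fun m => ?_
    rw [(hSX m).symm.measure_inter_preimage_eq_mul _ _ (measurableSet_singleton _)
      (measurableSet_singleton _), ← hSlaw m n]
    rfl
  · intro m m' hne
    exact Set.disjoint_left.2 fun ω hm hm' => hne (hm.1.symm.trans hm'.1)
  · exact fun m => (hX (measurableSet_singleton _)).inter
      ((by fun_prop : Measurable (∑ i ∈ range m, B i)) (measurableSet_singleton _))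

lemma HasPoissonLaw.thinning [IsProbabilityMeasure μ] {r : ℝ} {X Y : Ω → ℕ}
    (hp0 : 0 ≤ p) (hp1 : p ≤ 1) (hr : 0 ≤ r) (hX : Measurable X)
    (hXlaw : HasPoissonLaw μ r X) (hthin : IsThinning μ p X Y) :
    HasPoissonLaw μ (p * r) Y := by
  intro n
  have hmix := hasSum_poisson_mul_binomialMass r p n
  rw [hthin.measure_eq_tsum hp0 hp1 hX, ← hmix.tsum_eq, ENNReal.ofReal_tsum_of_nonneg
    (fun m => mul_nonneg (by positivity) (binomialMass_nonneg hp0 hp1 _ _)) hmix.summable]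
  exact tsum_congr fun m => by rw [hXlaw, ENNReal.ofReal_mul (by positivity)]

end

/-- With `x₀ = (λ₁/σ₁)(1 − e^{−(τ_D−τ_R)σ₁}/(2 − e^{−τ_D σ₁}))`, if
`M₀ ~ Poisson(x₀)`, `A` is an `e^{−σ₁ τ_D}`-thinning of `M₀`,
`N ~ Poisson((λ₁/σ₁)(1 − e^{−τ_D σ₁}))`, `N' ~ Poisson((λ₁/σ₁)(1 − e^{−(τ_D−τ_R)σ₁}))`,
and `A, N, N'` are independent, then any 1/2-thinning of `A + N + N'` is again
Poisson(x₀) distributed: `x₀` is the equilibrium parameter of the mRNA number at birth. -/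
theorem equilibrium_mRNA_at_birth_poisson
    {Ω : Type*} [MeasurableSpace Ω] (μ : Measure Ω) [IsProbabilityMeasure μ]
    (lam1 sig1 tauR tauD : ℝ)
    (hlam1 : 0 ≤ lam1) (hsig1 : 0 < sig1) (htauR : 0 ≤ tauR) (htauRD : tauR ≤ tauD)
    (x0 : ℝ)
    (hx0 : x0 = lam1 / sig1
      * (1 - Real.exp (-(tauD - tauR) * sig1) / (2 - Real.exp (-tauD * sig1))))
    (M0 A N N' : Ω → ℕ)
    (hM0 : Measurable M0) (hA : Measurable A) (hN : Measurable N) (hN' : Measurable N')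
    (hM0law : HasPoissonLaw μ x0 M0)
    (hAthin : IsThinning μ (Real.exp (-sig1 * tauD)) M0 A)
    (hNlaw : HasPoissonLaw μ (lam1 / sig1 * (1 - Real.exp (-tauD * sig1))) N)
    (hN'law : HasPoissonLaw μ (lam1 / sig1 * (1 - Real.exp (-(tauD - tauR) * sig1))) N')
    (hIndep : iIndepFun ![A, N, N'] μ) :
    ∀ T : Ω → ℕ, IsThinning μ (1 / 2) (fun ω => A ω + N ω + N' ω) T →
      HasPoissonLaw μ x0 T := by
  intro T hT
  set a := Real.exp (-(tauD - tauR) * sig1)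
  set b := Real.exp (-tauD * sig1)
  set L := lam1 / sig1
  have ha1 : a ≤ 1 := Real.exp_le_one_iff.2 (by nlinarith)
  have hb1 : b ≤ 1 := Real.exp_le_one_iff.2 (by nlinarith)
  have hL : 0 ≤ L := div_nonneg hlam1 hsig1.le
  have hx0_nonneg : 0 ≤ x0 := by
    rw [hx0]
    exact mul_nonneg hL (sub_nonneg.2 ((div_le_one (by linarith)).2 (by linarith)))
  have hx0_fixed : 1 / 2 * (b * x0 + L * (1 - b) + L * (1 - a)) = x0 := by
    have h2b : 2 - b ≠ 0 := by linarith
    rw [hx0]; field_simp; ring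
  have hAlaw : HasPoissonLaw μ (b * x0) A := by
    rw [show b = Real.exp (-sig1 * tauD) from congrArg Real.exp (by ring)]
    exact hM0law.thinning (Real.exp_pos _).le (Real.exp_le_one_iff.2 (by nlinarith))
      hx0_nonneg hM0 hAthin
  have hmeas : ∀ i, Measurable (![A, N, N'] i) := by
    intro i; fin_cases i <;> assumption
  have hANlaw := hAlaw.add (by positivity) (mul_nonneg hL (by linarith)) hA hN hNlaw
    (hIndep.indepFun (i := 0) (j := 1) (by decide))
  have hANN'law := hANlaw.add (by positivity) (mul_nonneg hL (by linarith)) (hA.add hN) hN'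
    hN'law (hIndep.indepFun_add_left hmeas 0 1 2 (by decide) (by decide))
  rw [← hx0_fixed]
  exact hANN'law.thinning (by norm_num) (by norm_num) (by positivity) ((hA.add hN).add hN') hT
end

section
/- Let σ₁ > 0, λ₁, λ₂ ≥ 0, s ≥ 0 and M₀, P₀ ∈ ℝ with M₀ ≥ 0. For ζ in a neighborhood of 0 (with ζ < σ₁ and (σ₁ − ζ e^{−(σ₁−ζ)s})/(σ₁ − ζ) > 0) define h(ζ) = exp( M₀·log((σ₁ − ζ·e^{−(σ₁−ζ)s})/(σ₁ − ζ)) + λ₁·(ζ/(σ₁−ζ))·(s − (1 − e^{−(σ₁−ζ)s})/(σ₁−ζ)) ), and for ξ in a neighborhood of 0 define F(ξ) = e^{ξ P₀}·h(λ₂(e^{ξ} − 1)). Then F is twice differentiable at 0 with F′(0) = P₀ + λ₂·((λ₁/σ₁)s + (M₀ − λ₁/σ₁)·(1 − e^{−σ₁ s})/σ₁) and F″(0) = (F′(0))² + M₀·(λ₂/σ₁)·(1 − e^{−σ₁ s} + (λ₂/σ₁)[1 − e^{−σ₁ s}(e^{−σ₁ s} + 2 s σ₁)]) + (λ₁λ₂/σ₁²)·[s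 σ₁ − 1 + e^{−σ₁ s} + 2(λ₂/σ₁)(σ₁ s (1 + e^{−σ₁ s}) − 2(1 − e^{−σ₁ s}))]. -/
/-!
Near `ξ = 0` we have `F ξ = e^{ξ P₀} · exp (K (λ₂ (e^ξ - 1)))`, where `K = log h` is the explicit
cumulant generating function of `∫₀^s M_u du`. Second-order Taylor data (value, first and second
derivative) propagate through sums, products, quotients and compositions, so it suffices to know
the first two cumulants `K'(0) = E ∫M` and `K''(0) = Var ∫M`; then
`F'(0) = P₀ + λ₂ K'(0)` and `F''(0) = F'(0)² + λ₂ K'(0) + λ₂² K''(0)`.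
-/

open Real Filter Topology

section SecondDeriv

variable {𝕜 : Type*} [NontriviallyNormedField 𝕜] {f g : 𝕜 → 𝕜} {f₁ f₂ g₁ g₂ x : 𝕜}

/-- Unlike `HasDerivAt (deriv f) f₂ x`, this asks for a derivative on a whole neighbourhood of `x`,
which is what makes it stable under products and composition. -/
def HasSecondDerivAt (f : 𝕜 → 𝕜) (f₁ f₂ x : 𝕜) : Prop :=
  ∃ f' : 𝕜 → 𝕜, (∀ᶠ y in 𝓝 x, HasDerivAt f (f' y) y) ∧ f' x = f₁ ∧ HasDerivAt f' f₂ x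

theorem hasSecondDerivAt_const (c x : 𝕜) : HasSecondDerivAt (fun _ => c) 0 0 x :=
  ⟨fun _ => 0, .of_forall fun y => hasDerivAt_const y c, rfl, hasDerivAt_const x 0⟩

theorem hasSecondDerivAt_id (x : 𝕜) : HasSecondDerivAt (fun y => y) 1 0 x :=
  ⟨fun _ => 1, .of_forall hasDerivAt_id', rfl, hasDerivAt_const x 1⟩

theorem hasSecondDerivAt_inv {x : 𝕜} (hx : x ≠ 0) :
    HasSecondDerivAt (fun y => y⁻¹) (-(x ^ 2)⁻¹) (2 * (x ^ 3)⁻¹) x := by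
  refine ⟨fun y => -(y ^ 2)⁻¹, (eventually_ne_nhds hx).mono fun y hy => hasDerivAt_inv hy, rfl, ?_⟩
  refine ((hasDerivAt_pow 2 x).inv (pow_ne_zero 2 hx)).neg.congr_deriv ?_
  field_simp
  ring

namespace HasSecondDerivAt

theorem hasDerivAt (h : HasSecondDerivAt f f₁ f₂ x) : HasDerivAt f f₁ x := by
  obtain ⟨f', hf, rfl, -⟩ := h
  exact hf.self_of_nhds

theorem hasDerivAt_deriv (h : HasSecondDerivAt f f₁ f₂ x) : HasDerivAt (deriv f) f₂ x := by
  obtain ⟨f', hf, -, hf'⟩ := h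
  exact hf'.congr_of_eventuallyEq (hf.mono fun _ hy => hy.deriv)

theorem congr_of_eventuallyEq (h : HasSecondDerivAt f f₁ f₂ x) (hg : g =ᶠ[𝓝 x] f) :
    HasSecondDerivAt g f₁ f₂ x := by
  obtain ⟨f', hf, hf₁, hf'⟩ := h
  refine ⟨f', ?_, hf₁, hf'⟩
  filter_upwards [hf, hg.eventuallyEq_nhds] with y hy hgy using hy.congr_of_eventuallyEq hgy

theorem add (hf : HasSecondDerivAt f f₁ f₂ x) (hg : HasSecondDerivAt g g₁ g₂ x) :
    HasSecondDerivAt (fun y => f y + g y) (f₁ + g₁) (f₂ + g₂) x := by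
  obtain ⟨f', hf, rfl, hf'⟩ := hf
  obtain ⟨g', hg, rfl, hg'⟩ := hg
  exact ⟨fun y => f' y + g' y, hf.and hg |>.mono fun _ h => h.1.add h.2, rfl, hf'.add hg'⟩

theorem sub (hf : HasSecondDerivAt f f₁ f₂ x) (hg : HasSecondDerivAt g g₁ g₂ x) :
    HasSecondDerivAt (fun y => f y - g y) (f₁ - g₁) (f₂ - g₂) x := by
  obtain ⟨f', hf, rfl, hf'⟩ := hf
  obtain ⟨g', hg, rfl, hg'⟩ := hg
  exact ⟨fun y => f' y - g' y, hf.and hg |>.mono fun _ h => h.1.sub h.2, rfl, hf'.sub hg'⟩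

theorem neg (hf : HasSecondDerivAt f f₁ f₂ x) :
    HasSecondDerivAt (fun y => -f y) (-f₁) (-f₂) x := by
  obtain ⟨f', hf, rfl, hf'⟩ := hf
  exact ⟨fun y => -f' y, hf.mono fun _ h => h.neg, rfl, hf'.neg⟩

theorem mul (hf : HasSecondDerivAt f f₁ f₂ x) (hg : HasSecondDerivAt g g₁ g₂ x) :
    HasSecondDerivAt (fun y => f y * g y) (f₁ * g x + f x * g₁)
      (f₂ * g x + 2 * f₁ * g₁ + f x * g₂) x := by
  obtain ⟨f', hf, rfl, hf'⟩ := hf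
  obtain ⟨g', hg, rfl, hg'⟩ := hg
  refine ⟨fun y => f' y * g y + f y * g' y, hf.and hg |>.mono fun _ h => h.1.mul h.2, rfl, ?_⟩
  exact ((hf'.mul hg.self_of_nhds).add (hf.self_of_nhds.mul hg')).congr_deriv (by ring)

theorem comp_of_eq {y : 𝕜} (hf : HasSecondDerivAt f f₁ f₂ y) (hg : HasSecondDerivAt g g₁ g₂ x)
    (hy : g x = y) :
    HasSecondDerivAt (fun z => f (g z)) (f₁ * g₁) (f₂ * g₁ ^ 2 + f₁ * g₂) x := by
  subst hy
  obtain ⟨f', hf, rfl, hf'⟩ := hf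
  obtain ⟨g', hg, rfl, hg'⟩ := hg
  have hfg : ∀ᶠ z in 𝓝 x, HasDerivAt f (f' (g z)) (g z) :=
    hg.self_of_nhds.continuousAt.eventually hf
  refine ⟨fun z => f' (g z) * g' z, hfg.and hg |>.mono fun _ h => h.1.comp _ h.2, rfl, ?_⟩
  exact ((hf'.comp x hg.self_of_nhds).mul hg').congr_deriv
    (by simp only [Function.comp_apply]; ring)

theorem div (hf : HasSecondDerivAt f f₁ f₂ x) (hg : HasSecondDerivAt g g₁ g₂ x)
    (hx : g x ≠ 0) :
    HasSecondDerivAt (fun y => f y / g y) ((f₁ * g x - f x * g₁) / g x ^ 2)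
      (f₂ / g x - (2 * f₁ * g₁ + f x * g₂) / g x ^ 2 + 2 * f x * g₁ ^ 2 / g x ^ 3) x := by
  convert hf.mul ((hasSecondDerivAt_inv hx).comp_of_eq hg rfl) using 1
  · simp only [div_eq_mul_inv]
  · field_simp
    ring
  · field_simp
    ring

end HasSecondDerivAt

end SecondDeriv

theorem Real.hasSecondDerivAt_exp (x : ℝ) : HasSecondDerivAt exp (exp x) (exp x) x :=
  ⟨exp, .of_forall Real.hasDerivAt_exp, rfl, Real.hasDerivAt_exp x⟩

theorem Real.hasSecondDerivAt_log {x : ℝ} (hx : x ≠ 0) :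
    HasSecondDerivAt log x⁻¹ (-(x ^ 2)⁻¹) x :=
  ⟨fun y => y⁻¹, (eventually_ne_nhds hx).mono fun _ hy => Real.hasDerivAt_log hy, rfl,
    by simpa using hasDerivAt_inv hx⟩

noncomputable def cgfIntegratedMRNA (sig1 lam1 s M0 ζ : ℝ) : ℝ :=
  M0 * log ((sig1 - ζ * exp (-(sig1 - ζ) * s)) / (sig1 - ζ))
    + lam1 * (ζ / (sig1 - ζ)) * (s - (1 - exp (-(sig1 - ζ) * s)) / (sig1 - ζ))

theorem hasSecondDerivAt_cgfIntegratedMRNA {sig1 : ℝ} (lam1 s M0 : ℝ) (hsig1 : sig1 ≠ 0) :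
    HasSecondDerivAt (cgfIntegratedMRNA sig1 lam1 s M0)
      (lam1 / sig1 * s + (M0 - lam1 / sig1) * (1 - exp (-sig1 * s)) / sig1)
      (M0 * (1 - exp (-sig1 * s) * (exp (-sig1 * s) + 2 * s * sig1)) / sig1 ^ 2
        + 2 * lam1 * (sig1 * s * (1 + exp (-sig1 * s)) - 2 * (1 - exp (-sig1 * s))) / sig1 ^ 3)
      0 := by
  unfold cgfIntegratedMRNA
  have hden := (hasSecondDerivAt_const sig1 (0 : ℝ)).sub (hasSecondDerivAt_id 0)
  have hden0 : sig1 - 0 ≠ 0 := by simpa using hsig1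
  have hdecay := (Real.hasSecondDerivAt_exp _).comp_of_eq
    (hden.neg.mul (hasSecondDerivAt_const s 0)) rfl
  have hnum := (hasSecondDerivAt_const sig1 (0 : ℝ)).sub ((hasSecondDerivAt_id 0).mul hdecay)
  have hlog := (Real.hasSecondDerivAt_log (by simp [hsig1])).comp_of_eq
    (hnum.div hden hden0) rfl
  have hfrac := (hasSecondDerivAt_id 0).div hden hden0
  have hbracket := (hasSecondDerivAt_const s 0).sub
    (((hasSecondDerivAt_const 1 0).sub hdecay).div hden hden0)
  convert ((hasSecondDerivAt_const M0 0).mul hlog).add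
    (((hasSecondDerivAt_const lam1 0).mul hfrac).mul hbracket) using 1 <;>
  · simp only [neg_mul, sub_zero, zero_sub, zero_mul, mul_zero, one_mul, neg_neg, zero_add,
      add_zero]
    field_simp
    ring

@[simp]
theorem cgfIntegratedMRNA_zero (sig1 lam1 s M0 : ℝ) : cgfIntegratedMRNA sig1 lam1 s M0 0 = 0 := by
  simp [cgfIntegratedMRNA]

theorem eventuallyEq_exp_cgfIntegratedMRNA {sig1 lam1 s M0 : ℝ} {h : ℝ → ℝ} (hsig1 : 0 < sig1)
    (hh : ∀ ζ : ℝ, ζ < sig1 → 0 < (sig1 - ζ * exp (-(sig1 - ζ) * s)) / (sig1 - ζ) →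
      h ζ = exp (cgfIntegratedMRNA sig1 lam1 s M0 ζ)) :
    h =ᶠ[𝓝 0] fun ζ => exp (cgfIntegratedMRNA sig1 lam1 s M0 ζ) := by
  have hcont : ContinuousAt (fun ζ => (sig1 - ζ * exp (-(sig1 - ζ) * s)) / (sig1 - ζ)) 0 := by
    fun_prop (disch := simp [hsig1.ne'])
  have hpos := hcont.eventually (lt_mem_nhds (a := 0) (by simp [hsig1.ne']))
  filter_upwards [eventually_lt_nhds hsig1, hpos] with ζ using hh ζ

theorem mgf_protein_before_replication_two_derivs_general
    (sig1 lam1 lam2 s M0 P0 : ℝ)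
    (hsig1 : 0 < sig1)
    (h F : ℝ → ℝ)
    (hh : ∀ ζ : ℝ, ζ < sig1 →
        0 < (sig1 - ζ * Real.exp (-(sig1 - ζ) * s)) / (sig1 - ζ) →
      h ζ = Real.exp (M0 * Real.log ((sig1 - ζ * Real.exp (-(sig1 - ζ) * s)) / (sig1 - ζ))
        + lam1 * (ζ / (sig1 - ζ))
          * (s - (1 - Real.exp (-(sig1 - ζ) * s)) / (sig1 - ζ))))
    (hF : ∀ ξ : ℝ, F ξ = Real.exp (ξ * P0) * h (lam2 * (Real.exp ξ - 1))) :
    HasDerivAt F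
      (P0 + lam2 * (lam1 / sig1 * s
        + (M0 - lam1 / sig1) * (1 - Real.exp (-sig1 * s)) / sig1)) 0 ∧
    HasDerivAt (deriv F)
      ((P0 + lam2 * (lam1 / sig1 * s
          + (M0 - lam1 / sig1) * (1 - Real.exp (-sig1 * s)) / sig1)) ^ 2
        + M0 * (lam2 / sig1) * (1 - Real.exp (-sig1 * s)
          + lam2 / sig1 * (1 - Real.exp (-sig1 * s)
            * (Real.exp (-sig1 * s) + 2 * s * sig1)))
        + lam1 * lam2 / sig1 ^ 2 * (s * sig1 - 1 + Real.exp (-sig1 * s)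
          + 2 * (lam2 / sig1) * (sig1 * s * (1 + Real.exp (-sig1 * s))
            - 2 * (1 - Real.exp (-sig1 * s))))) 0 := by
  obtain rfl : F = fun ξ => exp (ξ * P0) * h (lam2 * (exp ξ - 1)) := funext hF
  have hEq := eventuallyEq_exp_cgfIntegratedMRNA (lam1 := lam1) (M0 := M0) hsig1 hh
  have hH := ((Real.hasSecondDerivAt_exp _).comp_of_eq
    (hasSecondDerivAt_cgfIntegratedMRNA lam1 s M0 hsig1.ne') rfl).congr_of_eventuallyEq hEq
  have hz := (hasSecondDerivAt_const lam2 (0 : ℝ)).mul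
    ((Real.hasSecondDerivAt_exp 0).sub (hasSecondDerivAt_const 1 0))
  have hF := ((Real.hasSecondDerivAt_exp _).comp_of_eq
    ((hasSecondDerivAt_id 0).mul (hasSecondDerivAt_const P0 0)) rfl).mul
    (hH.comp_of_eq hz (by simp))
  have h0 : h 0 = 1 := by simpa using hEq.eq_of_nhds
  refine ⟨hF.hasDerivAt.congr_deriv ?_, hF.hasDerivAt_deriv.congr_deriv ?_⟩ <;>
    simp only [h0, cgfIntegratedMRNA_zero, neg_mul, Real.exp_zero, sub_self, mul_zero, zero_mul,
      mul_one, one_mul, sub_zero, add_zero, zero_add]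
  · field_simp
  · field_simp
    ring

/-- The conditional moment generating function
`F ξ = e^{ξ P₀} · h(λ₂(e^ξ − 1))` of the protein number before replication, where
`h` is the moment generating function of the integrated mRNA number, is twice
differentiable at `0`, with first derivative
`F'(0) = P₀ + λ₂((λ₁/σ₁)s + (M₀ − λ₁/σ₁)(1 − e^{−σ₁ s})/σ₁)` and second derivative
`F''(0) = F'(0)² + M₀ (λ₂/σ₁)(1 − e^{−σ₁ s} + (λ₂/σ₁)(1 − e^{−σ₁ s}(e^{−σ₁ s} + 2sσ₁)))
  + (λ₁λ₂/σ₁²)(sσ₁ − 1 + e^{−σ₁ s} + 2(λ₂/σ₁)(σ₁ s (1 + e^{−σ₁ s}) − 2(1 − e^{−σ₁ s})))`. -/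
theorem mgf_protein_before_replication_two_derivs
    (sig1 lam1 lam2 s M0 P0 : ℝ)
    (hsig1 : 0 < sig1) (hlam1 : 0 ≤ lam1) (hlam2 : 0 ≤ lam2) (hs : 0 ≤ s) (hM0 : 0 ≤ M0)
    (h F : ℝ → ℝ)
    (hh : ∀ ζ : ℝ, ζ < sig1 →
        0 < (sig1 - ζ * Real.exp (-(sig1 - ζ) * s)) / (sig1 - ζ) →
      h ζ = Real.exp (M0 * Real.log ((sig1 - ζ * Real.exp (-(sig1 - ζ) * s)) / (sig1 - ζ))
        + lam1 * (ζ / (sig1 - ζ))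
          * (s - (1 - Real.exp (-(sig1 - ζ) * s)) / (sig1 - ζ))))
    (hF : ∀ ξ : ℝ, F ξ = Real.exp (ξ * P0) * h (lam2 * (Real.exp ξ - 1))) :
    HasDerivAt F
      (P0 + lam2 * (lam1 / sig1 * s
        + (M0 - lam1 / sig1) * (1 - Real.exp (-sig1 * s)) / sig1)) 0 ∧
    HasDerivAt (deriv F)
      ((P0 + lam2 * (lam1 / sig1 * s
          + (M0 - lam1 / sig1) * (1 - Real.exp (-sig1 * s)) / sig1)) ^ 2
        + M0 * (lam2 / sig1) * (1 - Real.exp (-sig1 * s)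
          + lam2 / sig1 * (1 - Real.exp (-sig1 * s)
            * (Real.exp (-sig1 * s) + 2 * s * sig1)))
        + lam1 * lam2 / sig1 ^ 2 * (s * sig1 - 1 + Real.exp (-sig1 * s)
          + 2 * (lam2 / sig1) * (sig1 * s * (1 + Real.exp (-sig1 * s))
            - 2 * (1 - Real.exp (-sig1 * s))))) 0 :=
  mgf_protein_before_replication_two_derivs_general sig1 lam1 lam2 s M0 P0 hsig1 h F hh hF
end

section
/- Let K, N_Y ∈ ℕ, V > 0, Z > 0, and G, λ, μ : Fin K → ℝ with G_i > 0, λ_i ≥ 0, μ_i > 0. On the state space S = {x : Fin K → ℕ | ∑_i x_i ≤ N_Y}, with f_Y(x) = N_Y − ∑_i x_i, define π(x) = (1/Z)·(1/f_Y(x)!)·∏_{i} (G_i λ_i/(V μ_i))^{x_i}/x_i!. Then for every i ∈ Fin K and every x ∈ S with x_i ≥ 1, π(x)·μ_i·x_i = π(x − e_i)·λ_i·G_i·(f_Y(x) + 1)/V, where e_i is the i-th coordinate unit vector. -/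
open Finset

/-- Detailed balance (reversibility) for the RNA-polymerase allocation
model: with `f_Y x = N_Y − ∑ i, x i` free polymerases and invariant measure
`π x = (1/Z)(1/f_Y(x)!) ∏ i, (G i λ i/(V μ i))^{x i}/(x i)!`, for every gene `i` and every
state `x` with `∑ j, x j ≤ N_Y` and `x i ≥ 1`,
`π x · μ i · x i = π (x − eᵢ) · λ i · G i · (f_Y x + 1)/V`. -/
theorem rnap_allocation_detailed_balance
    (K NY : ℕ) (V Z : ℝ) (hV : 0 < V) (hZ : 0 < Z)
    (G lam mu : Fin K → ℝ)
    (hG : ∀ i, 0 < G i) (hlam : ∀ i, 0 ≤ lam i) (hmu : ∀ i, 0 < mu i)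
    (fY : (Fin K → ℕ) → ℕ) (hfY : ∀ x, fY x = NY - ∑ i, x i)
    (π : (Fin K → ℕ) → ℝ)
    (hπ : ∀ x, π x = 1 / Z * (1 / (Nat.factorial (fY x) : ℝ))
      * ∏ i, (G i * lam i / (V * mu i)) ^ (x i) / (Nat.factorial (x i) : ℝ)) :
    ∀ (i : Fin K) (x : Fin K → ℕ), (∑ j, x j) ≤ NY → 1 ≤ x i →
      π x * mu i * (x i : ℝ)
        = π (Function.update x i (x i - 1)) * (lam i * G i * ((fY x : ℝ) + 1) / V) := by
  intro i x hsum hxi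
  set y := Function.update x i (x i - 1) with hy
  have hyi : y i = x i - 1 := by simp [hy]
  have hyj : ∀ j ∈ Finset.univ.erase i, y j = x j := by
    intro j hj
    rw [hy, Function.update_of_ne (Finset.ne_of_mem_erase hj)]
  have hs1 : 1 ≤ ∑ j, x j :=
    le_trans hxi (Finset.single_le_sum (fun j _ => Nat.zero_le _) (Finset.mem_univ i))
  have hxerase : ∑ j, x j = x i + ∑ j ∈ Finset.univ.erase i, x j :=
    (Finset.add_sum_erase _ _ (Finset.mem_univ i)).symm
  have hyerase : ∑ j, y j = y i + ∑ j ∈ Finset.univ.erase i, x j := by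
    rw [← Finset.add_sum_erase _ y (Finset.mem_univ i)]
    exact congrArg _ (Finset.sum_congr rfl hyj)
  have hysum : ∑ j, y j = (∑ j, x j) - 1 := by
    rw [hyerase, hyi]; omega
  have hfYy : fY y = fY x + 1 := by
    rw [hfY, hfY, hysum]; omega
  -- split products
  have hPx : (∏ j, (G j * lam j / (V * mu j)) ^ (x j) / (Nat.factorial (x j) : ℝ))
      = ((G i * lam i / (V * mu i)) ^ (x i) / (Nat.factorial (x i) : ℝ)) *
        ∏ j ∈ Finset.univ.erase i, (G j * lam j / (V * mu j)) ^ (x j) / (Nat.factorial (x j) : ℝ) :=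
    (Finset.mul_prod_erase _ _ (Finset.mem_univ i)).symm
  have hPy : (∏ j, (G j * lam j / (V * mu j)) ^ (y j) / (Nat.factorial (y j) : ℝ))
      = ((G i * lam i / (V * mu i)) ^ (x i - 1) / (Nat.factorial (x i - 1) : ℝ)) *
        ∏ j ∈ Finset.univ.erase i, (G j * lam j / (V * mu j)) ^ (x j) / (Nat.factorial (x j) : ℝ) := by
    rw [← Finset.mul_prod_erase _ _ (Finset.mem_univ i), hyi]
    congr 1
    exact Finset.prod_congr rfl (fun j hj => by rw [hyj j hj])
  obtain ⟨m, hm⟩ : ∃ m, x i = m + 1 := ⟨x i - 1, by omega⟩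
  rw [hπ x, hπ y, hPx, hPy, hfYy, hm]
  have h1 : (Nat.factorial (fY x + 1) : ℝ) = (fY x + 1) * (Nat.factorial (fY x)) := by
    rw [Nat.factorial_succ]; push_cast; ring
  have h2 : (Nat.factorial (m + 1) : ℝ) = (m + 1) * (Nat.factorial m) := by
    rw [Nat.factorial_succ]; push_cast; ring
  have h3 : m + 1 - 1 = m := rfl
  rw [h1, h2, h3, pow_succ]
  have hfx : (Nat.factorial (fY x) : ℝ) ≠ 0 := Nat.cast_ne_zero.mpr (Nat.factorial_ne_zero _)
  have hfm : (Nat.factorial m : ℝ) ≠ 0 := Nat.cast_ne_zero.mpr (Nat.factorial_ne_zero _)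
  have hVne : V ≠ 0 := ne_of_gt hV
  have hZne : Z ≠ 0 := ne_of_gt hZ
  have hmune : mu i ≠ 0 := ne_of_gt (hmu i)
  have hfp : ((fY x : ℝ) + 1) ≠ 0 := by positivity
  have hmp : ((m : ℝ) + 1) ≠ 0 := by positivity
  push_cast
  generalize (∏ j ∈ Finset.univ.erase i, (G j * lam j / (V * mu j)) ^ (x j) / (Nat.factorial (x j) : ℝ)) = P
  generalize ((Nat.factorial (fY x) : ℝ)) = F at hfx
  generalize ((Nat.factorial m : ℝ)) = M at hfm
  generalize ((fY x : ℝ)) = f at hfp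
  generalize ((m : ℝ)) = mm at hmp
  field_simp
end

section
/- Let K, N_Y ∈ ℕ and c : Fin K → ℝ with c_i ≥ 0 for all i, and set Λ_Y = ∑_i c_i. On S = {x : Fin K → ℕ | ∑_i x_i ≤ N_Y} define π(x) = (N_Y!/(1+Λ_Y)^{N_Y})·(1/(N_Y − ∑_i x_i)!)·∏_i c_i^{x_i}/x_i!. Then (i) ∑_{x ∈ S} π(x) = 1, and (ii) for every n ≤ N_Y, ∑_{x ∈ S, ∑_i x_i = N_Y − n} π(x) = C(N_Y, n)·Λ_Y^{N_Y − n}/(1 + Λ_Y)^{N_Y}; i.e. under π the number of free RNA-polymerases F_Y = N_Y − ∑_i x_i has the binomial distribution B(N_Y, 1/(1+Λ_Y)). -/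
/-!
Group the states by the number `m = ∑ i, x i` of bound polymerases. By the multinomial theorem
the weights `∏ i, c i ^ x i / (x i)!` of the states with `m` bound polymerases add up to
`Λ ^ m / m!`, so that fibre has mass `C(N, m) Λ ^ m / (1 + Λ) ^ N`. These are the terms of the
binomial expansion of `(1 + Λ) ^ N / (1 + Λ) ^ N`, which gives both claims.
-/

open Finset Nat

variable {ι 𝕜 : Type*} [DecidableEq ι] [Field 𝕜] [CharZero 𝕜]

theorem sum_piAntidiag_prod_pow_div_factorial (s : Finset ι) (c : ι → 𝕜) (m : ℕ) :
    ∑ x ∈ s.piAntidiag m, ∏ i ∈ s, c i ^ x i / (x i)! = (∑ i ∈ s, c i) ^ m / m ! := by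
  rw [sum_pow_eq_sum_piAntidiag, sum_div]
  refine sum_congr rfl fun x hx => ?_
  have hfact : (m ! : 𝕜) = (∏ i ∈ s, ((x i)! : 𝕜)) * multinomial s x := by
    rw [← (mem_piAntidiag.1 hx).1, ← multinomial_spec]
    push_cast
    rfl
  have hmult : (multinomial s x : 𝕜) ≠ 0 := by exact_mod_cast (multinomial_pos s x).ne'
  rw [hfact, prod_div_distrib]
  field_simp

theorem filter_sum_eq_eq_piAntidiag [Fintype ι] {N m : ℕ} (hm : m ≤ N) :
    {x ∈ Iic (fun _ : ι => N) | ∑ i, x i ≤ N}.filter (fun x => ∑ i, x i = m)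
      = univ.piAntidiag m := by
  ext x
  simp only [mem_filter, mem_piAntidiag, mem_Iic, mem_univ, ne_eq, implies_true, and_true]
  refine ⟨And.right, fun hx => ⟨⟨fun i => ?_, hx ▸ hm⟩, hx⟩⟩
  calc x i ≤ ∑ j, x j := single_le_sum (fun j _ => Nat.zero_le _) (mem_univ i)
    _ = m := hx
    _ ≤ N := hm

theorem sum_range_choose_mul_pow {R : Type*} [CommSemiring R] (a : R) (N : ℕ) :
    ∑ m ∈ range (N + 1), (N.choose m : R) * a ^ m = (1 + a) ^ N := by
  rw [add_comm 1 a, add_pow]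
  exact sum_congr rfl fun m _ => by ring

/-- For the invariant distribution
`π x = (N_Y!/(1+Λ_Y)^{N_Y}) (1/(N_Y − ∑ x i)!) ∏ i, c i^{x i}/(x i)!` on the state space
`S = {x : Fin K → ℕ | ∑ i, x i ≤ N_Y}` (with `Λ_Y = ∑ i, c i`): (i) `π` sums to `1` over
`S`, and (ii) for every `n ≤ N_Y`, the `π`-probability that `∑ i, x i = N_Y − n` equals
`C(N_Y, n) Λ_Y^{N_Y−n}/(1+Λ_Y)^{N_Y}`, i.e. the number of free RNA-polymerases
`F_Y = N_Y − ∑ i, x i` is binomially distributed `B(N_Y, 1/(1+Λ_Y))` under `π`. -/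
theorem rnap_free_polymerases_binomial
    (K NY : ℕ) (c : Fin K → ℝ) (hc : ∀ i, 0 ≤ c i)
    (ΛY : ℝ) (hΛ : ΛY = ∑ i, c i)
    (S : Finset (Fin K → ℕ))
    (hS : S = (Finset.Iic (fun _ => NY)).filter (fun x => (∑ i, x i) ≤ NY))
    (π : (Fin K → ℕ) → ℝ)
    (hπ : ∀ x, π x = (Nat.factorial NY : ℝ) / (1 + ΛY) ^ NY
      * (1 / (Nat.factorial (NY - ∑ i, x i) : ℝ))
      * ∏ i, c i ^ (x i) / (Nat.factorial (x i) : ℝ)) :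
    (∑ x ∈ S, π x) = 1 ∧
    ∀ n : ℕ, n ≤ NY →
      (∑ x ∈ S.filter (fun x => (∑ i, x i) = NY - n), π x)
        = (Nat.choose NY n : ℝ) * ΛY ^ (NY - n) / (1 + ΛY) ^ NY := by
  have hΛ_pos : 0 < 1 + ΛY := by
    have : 0 ≤ ΛY := hΛ ▸ sum_nonneg fun i _ => hc i
    linarith
  have hfiber : ∀ m ≤ NY, ∑ x ∈ S.filter (fun x => ∑ i, x i = m), π x
      = (NY.choose m : ℝ) * ΛY ^ m / (1 + ΛY) ^ NY := by
    intro m hm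
    rw [hS, filter_sum_eq_eq_piAntidiag hm,
      sum_congr rfl fun x hx => by rw [hπ, (mem_piAntidiag.1 hx).1], ← mul_sum,
      sum_piAntidiag_prod_pow_div_factorial, ← hΛ, cast_choose ℝ hm]
    field_simp
  refine ⟨?_, fun n hn => by rw [hfiber (NY - n) (sub_le _ _), choose_symm hn]⟩
  have hmaps : ∀ x ∈ S, ∑ i, x i ∈ range (NY + 1) := fun x hx => by
    rw [hS, mem_filter] at hx
    exact mem_range_succ_iff.2 hx.2
  rw [← sum_fiberwise_of_maps_to hmaps,
    sum_congr rfl fun m hm => hfiber m (mem_range_succ_iff.1 hm), ← sum_div,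
    sum_range_choose_mul_pow, div_self (pow_pos hΛ_pos NY).ne']
end

section
/- Let τ, μ₂ > 0, λ₂ ≥ 0, let m, f_R : [0,τ] → ℝ be continuous, and let e, p : [0,τ] → ℝ be continuously differentiable with e(0) = e(τ), p(0) = p(τ), e′(s) = λ₂·m(s)·f_R(s) − μ₂·e(s) − (log 2/τ)·e(s) and p′(s) = μ₂·e(s) − (log 2/τ)·p(s) for all s ∈ [0,τ]. Then the cycle-averaged protein concentration satisfies (1/τ)·∫₀^{τ} p(s) ds = (λ₂ μ₂ τ/(log 2·(μ₂ τ + log 2)))·∫₀^{τ} m(u) f_R(u) du. -/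
open Real MeasureTheory intervalIntegral

/-- If `e` and `p` are continuously differentiable on `[0, τ]` with
`e 0 = e τ`, `p 0 = p τ`, and satisfy, for continuous `m` and `f_R`,
`e′ s = λ₂ m s f_R s − μ₂ e s − (log 2/τ) e s` and `p′ s = μ₂ e s − (log 2/τ) p s` on
`[0, τ]`, then the cycle-averaged protein concentration satisfies
`(1/τ) ∫₀^τ p = (λ₂ μ₂ τ/(log 2 (μ₂ τ + log 2))) ∫₀^τ m f_R`. -/
theorem average_protein_concentration
    (tau mu2 lam2 : ℝ) (htau : 0 < tau) (hmu2 : 0 < mu2) (hlam2 : 0 ≤ lam2)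
    (m fR : ℝ → ℝ) (hm : Continuous m) (hfR : Continuous fR)
    (e p : ℝ → ℝ)
    (he' : ∀ s ∈ Set.Icc (0 : ℝ) tau,
      HasDerivAt e (lam2 * m s * fR s - mu2 * e s - Real.log 2 / tau * e s) s)
    (hp' : ∀ s ∈ Set.Icc (0 : ℝ) tau,
      HasDerivAt p (mu2 * e s - Real.log 2 / tau * p s) s)
    (heper : e 0 = e tau) (hpper : p 0 = p tau) :
    (1 / tau) * ∫ s in (0 : ℝ)..tau, p s
      = lam2 * mu2 * tau / (Real.log 2 * (mu2 * tau + Real.log 2))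
        * ∫ u in (0 : ℝ)..tau, m u * fR u := by
  have hlog : 0 < Real.log 2 := Real.log_pos one_lt_two
  have huIcc : Set.uIcc (0:ℝ) tau = Set.Icc 0 tau := Set.uIcc_of_le htau.le
  have hec : ContinuousOn e (Set.Icc 0 tau) := fun x hx =>
    (he' x hx).continuousAt.continuousWithinAt
  have hpc : ContinuousOn p (Set.Icc 0 tau) := fun x hx =>
    (hp' x hx).continuousAt.continuousWithinAt
  have hie : IntervalIntegrable e volume 0 tau := hec.intervalIntegrable_of_Icc htau.le
  have hip : IntervalIntegrable p volume 0 tau := hpc.intervalIntegrable_of_Icc htau.le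
  have hmc : Continuous fun u => lam2 * m u * fR u := ((continuous_const.mul hm).mul hfR)
  have him : IntervalIntegrable (fun u => lam2 * m u * fR u) volume 0 tau :=
    hmc.intervalIntegrable _ _
  have him' : IntervalIntegrable (fun u => m u * fR u) volume 0 tau :=
    (hm.mul hfR).intervalIntegrable _ _
  have hieμ : IntervalIntegrable (fun s => mu2 * e s) volume 0 tau :=
    (continuousOn_const.mul hec).intervalIntegrable_of_Icc htau.le
  have hiec : IntervalIntegrable (fun s => Real.log 2 / tau * e s) volume 0 tau :=
    (continuousOn_const.mul hec).intervalIntegrable_of_Icc htau.le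
  have hipc : IntervalIntegrable (fun s => Real.log 2 / tau * p s) volume 0 tau :=
    (continuousOn_const.mul hpc).intervalIntegrable_of_Icc htau.le
  have hde : (∫ s in (0:ℝ)..tau,
      (lam2 * m s * fR s - mu2 * e s - Real.log 2 / tau * e s)) = e tau - e 0 := by
    apply intervalIntegral.integral_eq_sub_of_hasDerivAt
    · intro x hx; exact he' x (huIcc ▸ hx)
    · exact (him.sub hieμ).sub hiec
  have hdp : (∫ s in (0:ℝ)..tau, (mu2 * e s - Real.log 2 / tau * p s)) = p tau - p 0 := by
    apply intervalIntegral.integral_eq_sub_of_hasDerivAt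
    · intro x hx; exact hp' x (huIcc ▸ hx)
    · exact hieμ.sub hipc
  rw [intervalIntegral.integral_sub (him.sub hieμ) hiec,
      intervalIntegral.integral_sub him hieμ] at hde
  rw [intervalIntegral.integral_sub hieμ hipc] at hdp
  simp only [intervalIntegral.integral_const_mul] at hde hdp
  have hE1 : lam2 * ∫ u in (0:ℝ)..tau, m u * fR u
      = (mu2 + Real.log 2 / tau) * ∫ s in (0:ℝ)..tau, e s := by
    have : (∫ u in (0:ℝ)..tau, lam2 * m u * fR u)
        = lam2 * ∫ u in (0:ℝ)..tau, m u * fR u := by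
      rw [← intervalIntegral.integral_const_mul]
      congr 1; ext u; ring
    rw [this, heper] at hde
    linarith
  have hE2 : mu2 * ∫ s in (0:ℝ)..tau, e s
      = Real.log 2 / tau * ∫ s in (0:ℝ)..tau, p s := by
    rw [hpper] at hdp; linarith
  have htau' : tau ≠ 0 := ne_of_gt htau
  have hlog' : Real.log 2 ≠ 0 := ne_of_gt hlog
  have hden : mu2 * tau + Real.log 2 ≠ 0 := by positivity
  field_simp at hE1 hE2 ⊢
  nlinarith [hE1, hE2, sq_nonneg tau, mul_pos hmu2 htau]
end
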